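/- (Linear BSΔE) Let g_n(z) = A_n^T z + B_n where {A_n} is a Θ-valued predictable process and {B_n} a predictable real process, with Θ the convex hull of {v_0,...,v_d}. Then E^g_n(Y) = Ê[ Y + Σ_{i=n+1}^N B_i | F_n ], where Ê is expectation under the measure P̂ associated with the predictable Δ_d-valued process {P̂_n} satisfying A_n = v P̂_n. -/

import Mathlib

/-!
Averaging the BSΔE increment over the next step under `P̂_n` kills the martingale term, because
`Σ_j P̂_{n,j} w_j = V P̂_n = A_n` cancels the `A_nᵀ Z_n` part of the driver; what is left is the
one-step recursion `Y_n = Σ_j P̂_{n,j} Y_{n+1}(ω with ω_n = j) + B_n`. The product mass of an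
`F_{n+1}`-cylinder is `P̂_{n,j}` times the mass of its `F_n`-parent, so backward induction turns the
recursion into `Σ_{ω' ∈ cyl_n(ω)} P̂(ω') (Y_N + Σ_{i ≥ n} B_i)(ω') = Y_n(ω) · P̂(cyl_n(ω))`.
-/

open scoped Classical BigOperators
open Matrix

noncomputable section

/-- Path space: `N` steps, each increment indexed by `Fin (d+1)` (the increment at
step `n` being `v_{ω n}`). -/
abbrev PathSp (N d : ℕ) := Fin N → Fin (d + 1)

/-- Two paths agree on the first `n` coordinates. -/
def agreeOn {N d : ℕ} (n : ℕ) (ω ω' : PathSp N d) : Prop :=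
  ∀ k : Fin N, (k : ℕ) < n → ω k = ω' k

/-- A function of the path is `F_n`-measurable: it depends only on the first `n`
coordinates. -/
def MeasUpTo {N d : ℕ} {α : Type*} (n : ℕ) (f : PathSp N d → α) : Prop :=
  ∀ ω ω', agreeOn n ω ω' → f ω = f ω'

/-- Sum of `P ω' * f ω'` over the `F_n`-cylinder of `ω`. -/
def cylSum {N d : ℕ} (P : PathSp N d → ℝ) (n : ℕ) (f : PathSp N d → ℝ)
    (ω : PathSp N d) : ℝ :=
  ∑ ω' : PathSp N d, if agreeOn n ω ω' then P ω' * f ω' else 0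

/-- Elementary conditional expectation of `f` given the first `n` coordinates,
under the probability mass function `P`. -/
def cExp {N d : ℕ} (P : PathSp N d → ℝ) (n : ℕ) (f : PathSp N d → ℝ)
    (ω : PathSp N d) : ℝ :=
  cylSum P n f ω / cylSum P n (fun _ => 1) ω


open Finset

variable {N d : ℕ}

lemma MeasUpTo.mono {α : Type*} {m n : ℕ} (hmn : m ≤ n) {f : PathSp N d → α}
    (hf : MeasUpTo m f) : MeasUpTo n f :=
  fun ω ω' h => hf ω ω' fun k hk => h k (lt_of_lt_of_le hk hmn)

lemma agreeOn_update (m : Fin N) (ω : PathSp N d) (j : Fin (d + 1)) :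
    agreeOn m ω (Function.update ω m j) :=
  fun _ hk => (Function.update_of_ne (Fin.ne_of_lt hk) j ω).symm

lemma agreeOn_succ_update_iff {m : Fin N} {ω ω' : PathSp N d} {j : Fin (d + 1)} :
    agreeOn (m + 1) (Function.update ω m j) ω' ↔ agreeOn m ω ω' ∧ ω' m = j := by
  constructor
  · intro h
    refine ⟨fun k hk => ?_, ?_⟩
    · simpa [Function.update_of_ne (Fin.ne_of_lt hk)] using h k (by omega)
    · simpa using (h m (Nat.lt_succ_self _)).symm
  · rintro ⟨h, rfl⟩ k hk
    rcases Nat.lt_succ_iff_lt_or_eq.mp hk with hk | hk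
    · rw [Function.update_of_ne (Fin.ne_of_lt hk)]
      exact h k hk
    · rw [Fin.ext hk, Function.update_self]

lemma cylSum_eq_sum_update (P f : PathSp N d → ℝ) (m : Fin N) (ω : PathSp N d) :
    cylSum P m f ω = ∑ j, cylSum P (m + 1) f (Function.update ω m j) := by
  simp only [cylSum]
  rw [Finset.sum_comm]
  refine Finset.sum_congr rfl fun ω' _ => ?_
  simp [agreeOn_succ_update_iff, ite_and]

lemma cylSum_add (P f g : PathSp N d → ℝ) (n : ℕ) (ω : PathSp N d) :
    cylSum P n (fun ω' => f ω' + g ω') ω = cylSum P n f ω + cylSum P n g ω := by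
  simp only [cylSum, ← Finset.sum_add_distrib]
  refine Finset.sum_congr rfl fun ω' _ => ?_
  split_ifs <;> ring

lemma cylSum_of_measUpTo (P f : PathSp N d → ℝ) {n : ℕ} (hf : MeasUpTo n f)
    (ω : PathSp N d) : cylSum P n f ω = f ω * cylSum P n (fun _ => 1) ω := by
  simp only [cylSum, Finset.mul_sum]
  refine Finset.sum_congr rfl fun ω' _ => ?_
  split_ifs with h
  · rw [hf ω ω' h]
    ring
  · rw [mul_zero]

lemma cylSum_last (P f : PathSp N d → ℝ) (ω : PathSp N d) :
    cylSum P N f ω = P ω * f ω := by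
  have hagree : ∀ ω', agreeOn N ω ω' ↔ ω = ω' :=
    fun ω' => ⟨fun h => funext fun k => h k k.isLt, fun h _ _ => by rw [h]⟩
  simp [cylSum, hagree]

lemma prod_filter_val_lt_succ {M : Type*} [CommMonoid M] (m : Fin N) (f : Fin N → M) :
    ∏ i ∈ univ.filter (fun i : Fin N => (i : ℕ) < m + 1), f i
      = f m * ∏ i ∈ univ.filter (fun i : Fin N => (i : ℕ) < m), f i := by
  have hfilter : univ.filter (fun i : Fin N => (i : ℕ) < m + 1)
      = insert m (univ.filter (fun i : Fin N => (i : ℕ) < m)) := by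
    ext i
    simp only [mem_filter, mem_univ, true_and, mem_insert, Fin.ext_iff]
    omega
  rw [hfilter, prod_insert (by simp)]

lemma sum_filter_le_val {M : Type*} [AddCommMonoid M] (m : Fin N) (f : Fin N → M) :
    ∑ i ∈ univ.filter (fun i : Fin N => (m : ℕ) ≤ i), f i
      = f m + ∑ i ∈ univ.filter (fun i : Fin N => (m : ℕ) + 1 ≤ i), f i := by
  have hfilter : univ.filter (fun i : Fin N => (m : ℕ) ≤ i)
      = insert m (univ.filter (fun i : Fin N => (m : ℕ) + 1 ≤ i)) := by
    ext i
    simp only [mem_filter, mem_univ, true_and, mem_insert, Fin.ext_iff]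
    omega
  rw [hfilter, sum_insert (by simp)]

lemma prod_update_filter_lt_succ (Phat : Fin N → PathSp N d → Fin (d + 1) → ℝ)
    (hpred : ∀ n : Fin N, MeasUpTo (n : ℕ) (Phat n)) (m : Fin N) (ω : PathSp N d)
    (j : Fin (d + 1)) :
    ∏ i ∈ univ.filter (fun i : Fin N => (i : ℕ) < m + 1),
        Phat i (Function.update ω m j) (Function.update ω m j i)
      = Phat m ω j * ∏ i ∈ univ.filter (fun i : Fin N => (i : ℕ) < m), Phat i ω (ω i) := by
  rw [prod_filter_val_lt_succ, Function.update_self,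
    ← hpred m ω _ (agreeOn_update m ω j)]
  congr 1
  refine prod_congr rfl fun i hi => ?_
  have hi : i < m := by simpa using hi
  rw [Function.update_of_ne (Fin.ne_of_lt hi),
    hpred i _ ω fun k hk => (agreeOn_update m ω j k (hk.trans hi)).symm]

lemma cylSum_one_eq_prod (Phat : Fin N → PathSp N d → Fin (d + 1) → ℝ)
    (hpred : ∀ n : Fin N, MeasUpTo (n : ℕ) (Phat n)) (hsum : ∀ n ω, ∑ j, Phat n ω j = 1)
    (Pm : PathSp N d → ℝ) (hPm : ∀ ω, Pm ω = ∏ n, Phat n ω (ω n)) (n : Fin (N + 1))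
    (ω : PathSp N d) :
    cylSum Pm n (fun _ => 1) ω
      = ∏ i ∈ univ.filter (fun i : Fin N => (i : ℕ) < n), Phat i ω (ω i) := by
  induction n using Fin.reverseInduction generalizing ω with
  | last => simp [cylSum_last, hPm]
  | cast m ih =>
    simp only [Fin.val_succ] at ih
    rw [Fin.val_castSucc, cylSum_eq_sum_update]
    simp only [ih, prod_update_filter_lt_succ Phat hpred, ← sum_mul, hsum, one_mul]

lemma cylSum_one_update (Phat : Fin N → PathSp N d → Fin (d + 1) → ℝ)
    (hpred : ∀ n : Fin N, MeasUpTo (n : ℕ) (Phat n)) (hsum : ∀ n ω, ∑ j, Phat n ω j = 1)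
    (Pm : PathSp N d → ℝ) (hPm : ∀ ω, Pm ω = ∏ n, Phat n ω (ω n)) (m : Fin N)
    (ω : PathSp N d) (j : Fin (d + 1)) :
    cylSum Pm (m + 1) (fun _ => 1) (Function.update ω m j)
      = Phat m ω j * cylSum Pm m (fun _ => 1) ω := by
  have hmass := cylSum_one_eq_prod Phat hpred hsum Pm hPm
  have hsucc := hmass m.succ (Function.update ω m j)
  have hcast := hmass m.castSucc ω
  simp only [Fin.val_succ, Fin.val_castSucc] at hsucc hcast
  rw [hsucc, hcast, prod_update_filter_lt_succ Phat hpred]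

lemma eq_sum_mul_add_of_sub_eq {ι κ : Type*} [Fintype ι] [Fintype κ] {p : ι → ℝ}
    (hp : ∑ j, p j = 1) {w : ι → κ → ℝ} {a z : κ → ℝ} (ha : ∀ k, a k = ∑ j, w j k * p j)
    {y b : ℝ} {y' : ι → ℝ} (hy' : ∀ j, y' j - y = -(∑ k, a k * z k + b) + ∑ k, z k * w j k) :
    y = ∑ j, p j * y' j + b := by
  have hmean : ∑ j, p j * ∑ k, z k * w j k = ∑ k, a k * z k := by
    simp only [mul_sum, ha, sum_mul]
    rw [sum_comm]
    exact sum_congr rfl fun k _ => sum_congr rfl fun j _ => by ring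
  have hy'' : ∀ j, y' j = (y - (∑ k, a k * z k + b)) + ∑ k, z k * w j k :=
    fun j => by linarith [hy' j]
  simp only [hy'', mul_add, sum_add_distrib, ← sum_mul, hp, hmean]
  ring

theorem cylSum_payoff_eq (Phat : Fin N → PathSp N d → Fin (d + 1) → ℝ)
    (hpred : ∀ n : Fin N, MeasUpTo (n : ℕ) (Phat n)) (hsum : ∀ n ω, ∑ j, Phat n ω j = 1)
    (Pm : PathSp N d → ℝ) (hPm : ∀ ω, Pm ω = ∏ n, Phat n ω (ω n))
    (Y : Fin (N + 1) → PathSp N d → ℝ) (B : Fin N → PathSp N d → ℝ)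
    (hB : ∀ n : Fin N, MeasUpTo (n : ℕ) (B n))
    (hrec : ∀ (m : Fin N) (ω : PathSp N d),
      Y m.castSucc ω = ∑ j, Phat m ω j * Y m.succ (Function.update ω m j) + B m ω)
    (n : Fin (N + 1)) (ω : PathSp N d) :
    cylSum Pm n (fun ω' => Y (Fin.last N) ω'
        + ∑ i ∈ univ.filter (fun i : Fin N => (n : ℕ) ≤ i), B i ω') ω
      = Y n ω * cylSum Pm n (fun _ => 1) ω := by
  induction n using Fin.reverseInduction generalizing ω with
  | last =>
    have hempty : univ.filter (fun i : Fin N => N ≤ (i : ℕ)) = ∅ :=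
      filter_false_of_mem fun i _ => not_le.mpr i.isLt
    simp [cylSum_last, hempty, mul_comm]
  | cast m ih =>
    simp only [Fin.val_succ] at ih
    have hBm : ∀ j, cylSum Pm (m + 1) (B m) (Function.update ω m j)
        = B m ω * cylSum Pm (m + 1) (fun _ => 1) (Function.update ω m j) := fun j => by
      rw [cylSum_of_measUpTo _ _ ((hB m).mono (Nat.le_succ _)),
        ← hB m ω _ (agreeOn_update m ω j)]
    have hsplit : ∀ ω' : PathSp N d,
        Y (Fin.last N) ω' + ∑ i ∈ univ.filter (fun i : Fin N => (m : ℕ) ≤ i), B i ω'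
          = (Y (Fin.last N) ω' + ∑ i ∈ univ.filter (fun i : Fin N => (m : ℕ) + 1 ≤ i), B i ω')
            + B m ω' := fun ω' => by
      rw [sum_filter_le_val]
      ring
    calc cylSum Pm m.castSucc (fun ω' => Y (Fin.last N) ω'
            + ∑ i ∈ univ.filter (fun i : Fin N => (m.castSucc : ℕ) ≤ i), B i ω') ω
        = ∑ j, cylSum Pm (m + 1) (fun ω' => (Y (Fin.last N) ω'
            + ∑ i ∈ univ.filter (fun i : Fin N => (m : ℕ) + 1 ≤ i), B i ω') + B m ω')
              (Function.update ω m j) := by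
          simp only [Fin.val_castSucc, hsplit, cylSum_eq_sum_update]
      _ = ∑ j, (Phat m ω j * Y m.succ (Function.update ω m j) + Phat m ω j * B m ω)
            * cylSum Pm m (fun _ => 1) ω :=
          sum_congr rfl fun j _ => by
            rw [cylSum_add, ih, hBm, cylSum_one_update Phat hpred hsum Pm hPm]
            ring
      _ = Y m.castSucc ω * cylSum Pm m.castSucc (fun _ => 1) ω := by
          rw [← sum_mul, sum_add_distrib, ← sum_mul, hsum, one_mul, ← hrec, Fin.val_castSucc]

theorem stmt12_general (N d : ℕ)
    (w : Fin (d + 1) → (Fin d → ℝ))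
    (V : Matrix (Fin d) (Fin (d + 1)) ℝ) (hV : ∀ k i, V k i = w i k)
    (Phat : Fin N → PathSp N d → Fin (d + 1) → ℝ)
    (hpred : ∀ n : Fin N, MeasUpTo (n : ℕ) (Phat n))
    (hsimplex : ∀ n ω, (∀ j, 0 ≤ Phat n ω j) ∧ ∑ j, Phat n ω j = 1)
    (A : Fin N → PathSp N d → (Fin d → ℝ)) (hA : ∀ n ω, A n ω = V.mulVec (Phat n ω))
    (B : Fin N → PathSp N d → ℝ) (hB : ∀ n : Fin N, MeasUpTo (n : ℕ) (B n))
    (g : Fin N → PathSp N d → (Fin d → ℝ) → ℝ)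
    (hgdef : ∀ n ω z, g n ω z = (∑ k, A n ω k * z k) + B n ω)
    (Pm : PathSp N d → ℝ) (hPm : ∀ ω, Pm ω = ∏ n, Phat n ω (ω n))
    (Yterm : PathSp N d → ℝ)
    (Y : Fin (N + 1) → PathSp N d → ℝ) (Z : Fin N → PathSp N d → (Fin d → ℝ))
    (hYad : ∀ n : Fin (N + 1), MeasUpTo (n : ℕ) (Y n))
    (hZpred : ∀ n : Fin N, MeasUpTo (n : ℕ) (Z n))
    (hterm : Y (Fin.last N) = Yterm)
    (heq : ∀ (n : Fin N) (ω : PathSp N d),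
      Y n.succ ω - Y n.castSucc ω
        = -(g n ω (Z n ω)) + ∑ k, Z n ω k * w (ω n) k) :
    ∀ (n : Fin (N + 1)) (ω : PathSp N d),
      0 < cylSum Pm (n : ℕ) (fun _ => 1) ω →
      Y n ω = cExp Pm (n : ℕ) (fun ω' => Yterm ω'
        + ∑ i ∈ Finset.univ.filter (fun i : Fin N => (n : ℕ) ≤ (i : ℕ)), B i ω') ω := by
  have hsum : ∀ n ω, ∑ j, Phat n ω j = 1 := fun n ω => (hsimplex n ω).2
  have hrec : ∀ (m : Fin N) (ω : PathSp N d),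
      Y m.castSucc ω = ∑ j, Phat m ω j * Y m.succ (Function.update ω m j) + B m ω := by
    intro m ω
    refine eq_sum_mul_add_of_sub_eq (hsum m ω) (w := w) (a := A m ω) (z := Z m ω)
      (fun k => by simp only [hA, mulVec, dotProduct, hV]) fun j => ?_
    have hag := agreeOn_update m ω j
    have h := heq m (Function.update ω m j)
    rwa [hgdef, Function.update_self, ← hZpred m ω _ hag, hA, ← hpred m ω _ hag, ← hA,
      ← hB m ω _ hag, ← hYad m.castSucc ω _ hag] at h
  intro n ω hpos
  rw [cExp, ← hterm, cylSum_payoff_eq Phat hpred hsum Pm hPm Y B hB hrec,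
    mul_div_assoc, div_self hpos.ne', mul_one]

/-- linear BSΔE: with `g_n(z) = A_nᵀ z + B_n`, `A_n = v P̂_n` for a
`Δ_d`-valued predictable `{P̂_n}` and `{B_n}` predictable, the solution is
`E^g_n(Y) = Ê[Y + Σ_{i=n+1}^N B_i | F_n]` under the measure `P̂` with path mass
`∏_n P̂_{n, ω_n}`, wherever the conditional expectation is defined. -/
theorem stmt12 (N d : ℕ) (v : Fin d → (Fin d → ℝ)) (hv : LinearIndependent ℝ v)
    (hspan : Submodule.span ℝ (Set.range v) = ⊤)
    (w : Fin (d + 1) → (Fin d → ℝ))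
    (hw0 : w 0 = -(∑ k, v k)) (hws : ∀ k : Fin d, w k.succ = v k)
    (V : Matrix (Fin d) (Fin (d + 1)) ℝ) (hV : ∀ k i, V k i = w i k)
    (Phat : Fin N → PathSp N d → Fin (d + 1) → ℝ)
    (hpred : ∀ n : Fin N, MeasUpTo (n : ℕ) (Phat n))
    (hsimplex : ∀ n ω, (∀ j, 0 ≤ Phat n ω j) ∧ ∑ j, Phat n ω j = 1)
    (A : Fin N → PathSp N d → (Fin d → ℝ)) (hA : ∀ n ω, A n ω = V.mulVec (Phat n ω))
    (B : Fin N → PathSp N d → ℝ) (hB : ∀ n : Fin N, MeasUpTo (n : ℕ) (B n))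
    (g : Fin N → PathSp N d → (Fin d → ℝ) → ℝ)
    (hgdef : ∀ n ω z, g n ω z = (∑ k, A n ω k * z k) + B n ω)
    (Pm : PathSp N d → ℝ) (hPm : ∀ ω, Pm ω = ∏ n, Phat n ω (ω n))
    (Yterm : PathSp N d → ℝ)
    (Y : Fin (N + 1) → PathSp N d → ℝ) (Z : Fin N → PathSp N d → (Fin d → ℝ))
    (hYad : ∀ n : Fin (N + 1), MeasUpTo (n : ℕ) (Y n))
    (hZpred : ∀ n : Fin N, MeasUpTo (n : ℕ) (Z n))
    (hterm : Y (Fin.last N) = Yterm)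
    (heq : ∀ (n : Fin N) (ω : PathSp N d),
      Y n.succ ω - Y n.castSucc ω
        = -(g n ω (Z n ω)) + ∑ k, Z n ω k * w (ω n) k) :
    ∀ (n : Fin (N + 1)) (ω : PathSp N d),
      0 < cylSum Pm (n : ℕ) (fun _ => 1) ω →
      Y n ω = cExp Pm (n : ℕ) (fun ω' => Yterm ω'
        + ∑ i ∈ Finset.univ.filter (fun i : Fin N => (n : ℕ) ≤ (i : ℕ)), B i ω') ω :=
  stmt12_general N d w V hV Phat hpred hsimplex A hA B hB g hgdef Pm hPm Yterm Y Z hYad hZpred hterm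
    heq
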